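/- arXiv:2405.11952 — 4 statements merged into one kernel-verified Lean document; each statement's English description precedes it below -/
import Mathlib

section
/- The principal branch of the Lambert W function satisfies W(x) = log x − log log x + o(1) as x → ∞. -/
open Real Filter Topology

/-! Taking logarithms in `W x * exp (W x) = x` gives `log x = W x + log (W x)`, hence
`W x - (log x - log (log x)) = log (1 + log (W x) / W x)`. Since `W x → ∞` and
`log w / w → 0`, the right-hand side tends to `log 1 = 0`. -/

lemma mul_exp_le_mul_exp {s t : ℝ} (hst : s ≤ t) (ht : 0 ≤ t) : s * exp s ≤ t * exp t := by
  rcases lt_or_ge s 0 with hs | hs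
  · have : s * exp s < 0 := mul_neg_of_neg_of_pos hs (exp_pos s)
    linarith [mul_nonneg ht (exp_pos t).le]
  · exact mul_le_mul hst (exp_le_exp.2 hst) (exp_pos s).le ht

lemma tendsto_atTop_of_mul_exp_eq {α : Type*} {l : Filter α} {f g : α → ℝ}
    (hg : Tendsto g l atTop) (hfg : ∀ᶠ a in l, f a * exp (f a) = g a) :
    Tendsto f l atTop := by
  refine tendsto_atTop.2 fun M => ?_
  filter_upwards [hfg, hg.eventually_gt_atTop (max M 0 * exp (max M 0))] with a hfa hga
  by_contra! hlt
  have := mul_exp_le_mul_exp (hlt.le.trans (le_max_left M 0)) (le_max_right M 0)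
  linarith

lemma log_mul_exp {w : ℝ} (hw : w ≠ 0) : log (w * exp w) = w + log w := by
  rw [log_mul hw (exp_ne_zero w), log_exp, add_comm]

lemma sub_log_sub_log_log_eq_of_mul_exp_eq {w x : ℝ} (hw : w ≠ 0) (hw' : w + log w ≠ 0)
    (hx : w * exp w = x) : w - (log x - log (log x)) = log (1 + log w / w) := by
  have hsum : 1 + log w / w = (w + log w) / w := by field_simp
  rw [← hx, log_mul_exp hw, hsum, log_div hw' hw]
  ring

lemma tendsto_log_one_add_log_div_self_atTop :
    Tendsto (fun t : ℝ => log (1 + log t / t)) atTop (𝓝 0) := by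
  have hratio : Tendsto (fun t : ℝ => log t / t) atTop (𝓝 0) := by
    simpa using isLittleO_log_id_atTop.tendsto_div_nhds_zero
  have hone : Tendsto (fun t : ℝ => 1 + log t / t) atTop (𝓝 1) := by
    simpa using hratio.const_add 1
  simpa using hone.log one_ne_zero

/-- The principal branch of the Lambert W function satisfies
`W(x) = log x − log log x + o(1)` as `x → ∞`. -/
theorem lambert_asymptotics (W : ℝ → ℝ)
    (hW : ∀ x : ℝ, 0 ≤ x → 0 ≤ W x ∧ W x * Real.exp (W x) = x) :
    Filter.Tendsto (fun x : ℝ => W x - (Real.log x - Real.log (Real.log x)))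
      Filter.atTop (nhds 0) := by
  have hWtop : Tendsto W atTop atTop :=
    tendsto_atTop_of_mul_exp_eq tendsto_id
      ((eventually_ge_atTop 0).mono fun x hx => (hW x hx).2)
  refine (tendsto_log_one_add_log_div_self_atTop.comp hWtop).congr' ?_
  filter_upwards [hWtop.eventually_ge_atTop 1, eventually_ge_atTop 0] with x hW1 hx
  have hlog : 0 ≤ log (W x) := log_nonneg hW1
  exact (sub_log_sub_log_log_eq_of_mul_exp_eq (by linarith) (by linarith) (hW x hx).2).symm
end

section
/- For each n ≥ 1 there exist real constants a_{k,n} (1 ≤ k ≤ n) with a_{n,n} = (−1)^{n−1}(n−1)! such that the n-th derivative of the Lambert W function satisfies W⁽ⁿ⁾(x) = (W(x)^{n−1}/(xⁿ(1+W(x))^{2n−1}))·Σ_{k=1}^{n} a_{k,n} W(x)^k for all x > 0, where the a_{k,n} satisfy the recursion a_{n,n} = −(n−1)·a_{n−1,n−1} with a_{1,1} = 1. -/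
/-!
Write `u = W x`. Since `W' = u / (x (1 + u))`, differentiating
`u ^ (m + 1) P_m(u) / (x ^ (m + 1) (1 + u) ^ (2m + 1))` gives the same shape with `m + 1` and
`P_{m+1} = (1 + X) P_m' - ((3m + 2) + (m + 1) X) P_m`, starting from `P_0 = 1`; the constants
`a_{k,n}` are the coefficients of `P_{n-1}` shifted by one. `P_m` has degree at most `m`, so its
top coefficient is only multiplied by `-(m + 1)` at each step.
-/

open Polynomial

noncomputable def lambertPoly : ℕ → ℝ[X]
  | 0 => 1
  | m + 1 => (1 + X) * derivative (lambertPoly m) -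
      (C (3 * m + 2 : ℝ) + C (m + 1 : ℝ) * X) * lambertPoly m

theorem natDegree_lambertPoly_le (m : ℕ) : (lambertPoly m).natDegree ≤ m := by
  induction m with
  | zero => simp [lambertPoly]
  | succ m ih =>
    have h1X : ((1 : ℝ[X]) + X).natDegree ≤ 1 := by compute_degree
    have hlin : (C (3 * m + 2 : ℝ) + C (m + 1 : ℝ) * X).natDegree ≤ 1 := by compute_degree
    have hd : (derivative (lambertPoly m)).natDegree ≤ m - 1 :=
      (natDegree_derivative_le _).trans (Nat.sub_le_sub_right ih 1)
    rw [lambertPoly]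
    refine (natDegree_sub_le _ _).trans (max_le ?_ ?_)
    · exact (natDegree_mul_le_of_le h1X hd).trans (by omega)
    · exact (natDegree_mul_le_of_le hlin ih).trans (by omega)

theorem coeff_lambertPoly_succ_self (m : ℕ) :
    (lambertPoly (m + 1)).coeff (m + 1) = -(m + 1) * (lambertPoly m).coeff m := by
  have hdeg := natDegree_lambertPoly_le m
  have hD : ∀ k, m ≤ k → (derivative (lambertPoly m)).coeff k = 0 := fun k hk => by
    rw [coeff_derivative, coeff_eq_zero_of_natDegree_lt (by omega), zero_mul]
  rw [lambertPoly]
  simp [add_mul, mul_assoc, coeff_X_mul, hD m le_rfl, hD (m + 1) (by omega),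
    coeff_eq_zero_of_natDegree_lt (show (lambertPoly m).natDegree < m + 1 by omega)]

theorem coeff_lambertPoly_self (m : ℕ) :
    (lambertPoly m).coeff m = (-1) ^ m * m.factorial := by
  induction m with
  | zero => simp [lambertPoly]
  | succ m ih =>
    rw [coeff_lambertPoly_succ_self, ih, Nat.factorial_succ]
    push_cast
    ring

theorem sum_Icc_coeff_pred_mul_pow {R : Type*} [CommSemiring R] {p : R[X]} {n : ℕ}
    (hp : p.natDegree ≤ n) (u : R) :
    ∑ k ∈ Finset.Icc 1 (n + 1), p.coeff (k - 1) * u ^ k = u * p.eval u := by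
  rw [eval_eq_sum_range' (Nat.lt_succ_of_le hp), Finset.mul_sum,
    ← Finset.Ico_add_one_right_eq_Icc, Finset.sum_Ico_eq_sum_range]
  refine Finset.sum_congr (by simp) fun k _ => ?_
  rw [Nat.add_sub_cancel_left]
  ring

noncomputable def lambertDerivFormula (f : ℝ → ℝ) (m : ℕ) (x : ℝ) : ℝ :=
  f x ^ (m + 1) * (lambertPoly m).eval (f x) / (x ^ (m + 1) * (1 + f x) ^ (2 * m + 1))

theorem hasDerivAt_lambertDerivFormula {f : ℝ → ℝ} {x : ℝ}
    (hf : HasDerivAt f (f x / (x * (f x + 1))) x) (hx : x ≠ 0) (hf1 : f x + 1 ≠ 0) (m : ℕ) :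
    HasDerivAt (lambertDerivFormula f m) (lambertDerivFormula f (m + 1) x) x := by
  have h1f : 1 + f x ≠ 0 := by rwa [add_comm]
  have hnum : HasDerivAt (fun y => f y ^ (m + 1) * (lambertPoly m).eval (f y)) _ x :=
    (hf.pow (m + 1)).mul (((lambertPoly m).hasDerivAt (f x)).comp x hf)
  have hden : HasDerivAt (fun y => y ^ (m + 1) * (1 + f y) ^ (2 * m + 1)) _ x :=
    (hasDerivAt_pow (m + 1) x).mul ((hf.const_add 1).pow (2 * m + 1))
  refine (hnum.div hden (mul_ne_zero (pow_ne_zero _ hx) (pow_ne_zero _ h1f))).congr_deriv ?_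
  simp only [lambertDerivFormula, lambertPoly, eval_sub, eval_mul, eval_add, eval_one, eval_X,
    eval_C, Nat.add_sub_cancel, Pi.pow_apply]
  field_simp
  push_cast
  ring

theorem eqOn_iteratedDeriv_succ_lambertDerivFormula {f : ℝ → ℝ} {s : Set ℝ} (hs : IsOpen s)
    (hf : ∀ x ∈ s, HasDerivAt f (f x / (x * (f x + 1))) x) (hs0 : ∀ x ∈ s, x ≠ 0)
    (hf1 : ∀ x ∈ s, f x + 1 ≠ 0) (m : ℕ) :
    Set.EqOn (iteratedDeriv (m + 1) f) (lambertDerivFormula f m) s := by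
  induction m with
  | zero =>
    intro x hx
    rw [iteratedDeriv_one, (hf x hx).deriv]
    simp [lambertDerivFormula, lambertPoly, add_comm]
  | succ m ih =>
    intro x hx
    rw [iteratedDeriv_succ, (ih.eventuallyEq_of_mem (hs.mem_nhds hx)).deriv_eq,
      (hasDerivAt_lambertDerivFormula (hf x hx) (hs0 x hx) (hf1 x hx) m).deriv]

/-- For each `n ≥ 1` there are real constants `a_{k,n}` (`1 ≤ k ≤ n`) with
`a_{1,1} = 1`, `a_{n,n} = −(n−1)·a_{n−1,n−1}`, hence `a_{n,n} = (−1)^{n−1}(n−1)!`, such that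
`W⁽ⁿ⁾(x) = (W(x)^{n−1}/(xⁿ(1+W(x))^{2n−1}))·Σ_{k=1}^{n} a_{k,n} W(x)^k` for all `x > 0`.
Here `W` is the principal branch of the Lambert W function, characterized by its functional
equation and its first derivative formula. -/
theorem lambert_iterated_derivative_formula (W : ℝ → ℝ)
    (hW : ∀ x : ℝ, 0 ≤ x → 0 ≤ W x ∧ W x * Real.exp (W x) = x)
    (hW' : ∀ x : ℝ, 0 < x → HasDerivAt W (W x / (x * (W x + 1))) x) :
    ∃ a : ℕ → ℕ → ℝ,
      a 1 1 = 1 ∧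
      (∀ n : ℕ, 2 ≤ n → a n n = -((n : ℝ) - 1) * a (n-1) (n-1)) ∧
      (∀ n : ℕ, 1 ≤ n → a n n = (-1 : ℝ) ^ (n-1) * (Nat.factorial (n-1) : ℝ)) ∧
      ∀ n : ℕ, 1 ≤ n → ∀ x : ℝ, 0 < x →
        iteratedDeriv n W x =
          (W x) ^ (n-1) / (x ^ n * (1 + W x) ^ (2*n - 1)) *
            ∑ k ∈ Finset.Icc 1 n, a k n * (W x) ^ k := by
  refine ⟨fun k n => (lambertPoly (n - 1)).coeff (k - 1), by simp [lambertPoly], ?_, ?_, ?_⟩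
  · intro n hn
    obtain ⟨m, rfl⟩ : ∃ m, n = m + 2 := ⟨n - 2, by omega⟩
    show (lambertPoly (m + 1)).coeff (m + 1) = -(((m + 2 : ℕ) : ℝ) - 1) * (lambertPoly m).coeff m
    rw [coeff_lambertPoly_succ_self]
    push_cast
    ring
  · intro n hn
    obtain ⟨m, rfl⟩ : ∃ m, n = m + 1 := ⟨n - 1, by omega⟩
    exact coeff_lambertPoly_self m
  · intro n hn x hx
    obtain ⟨m, rfl⟩ : ∃ m, n = m + 1 := ⟨n - 1, by omega⟩
    have hW1 : ∀ y ∈ Set.Ioi (0 : ℝ), W y + 1 ≠ 0 := fun y hy => by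
      linarith [(hW y (le_of_lt hy)).1]
    beta_reduce
    rw [eqOn_iteratedDeriv_succ_lambertDerivFormula isOpen_Ioi hW' (fun y hy => ne_of_gt hy) hW1
      m hx, Nat.add_sub_cancel, show 2 * (m + 1) - 1 = 2 * m + 1 by omega,
      sum_Icc_coeff_pred_mul_pow (natDegree_lambertPoly_le m), lambertDerivFormula]
    ring
end

section
/- As x → ∞, the n-th derivative of the Lambert W function satisfies W⁽ⁿ⁾(x) = ((−1)^{n−1}(n−1)!/xⁿ)·(1 + O(1/log x)), matching the asymptotics of d^n(log x)/dx^n = (−1)^{n−1}(n−1)!/xⁿ. -/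
/-!
Put `u = W / (1 + W)`. Then `W' = u / x` and `x u' = u (1 - u)²`, so by induction
`W⁽ᵐ⁺¹⁾(x) = P_m(u) / x ^ (m + 1)` for polynomials `P_m` with `P_m(1) = (-1)ᵐ m!`. Since
`W e^W = x` forces `log x ≤ 2 W`, we get `0 ≤ 1 - u = 1 / (1 + W) ≤ 2 / log x`, and a polynomial
is Lipschitz on `[0, 1]`, so `|P_m(u) - P_m(1)| = O(1 / log x)`.
-/

open Polynomial

theorem Polynomial.exists_norm_eval_sub_eval_le {𝕜 : Type*} [NormedField 𝕜] (p : 𝕜[X]) (c : 𝕜)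
    {s : Set 𝕜} (hs : IsCompact s) : ∃ K, ∀ u ∈ s, ‖p.eval u - p.eval c‖ ≤ K * ‖u - c‖ := by
  obtain ⟨q, hq⟩ := X_sub_C_dvd_sub_C_eval (p := p) (a := c)
  obtain ⟨K, hK⟩ := hs.exists_bound_of_continuousOn q.continuous.continuousOn
  refine ⟨K, fun u hu => ?_⟩
  have hpu : p.eval u - p.eval c = (u - c) * q.eval u := by
    simpa using congrArg (eval u) hq
  rw [hpu, norm_mul, mul_comm K]
  exact mul_le_mul_of_nonneg_left (hK u hu) (norm_nonneg _)

theorem Real.iteratedDeriv_succ_log (n : ℕ) (x : ℝ) :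
    iteratedDeriv (n + 1) Real.log x = (-1) ^ n * n.factorial / x ^ (n + 1) := by
  rw [iteratedDeriv_succ', Real.deriv_log', iteratedDeriv_eq_iterate, iter_deriv_inv,
    show (-1 - n : ℤ) = -((n + 1 : ℕ) : ℤ) by push_cast; ring, zpow_neg, zpow_natCast,
    div_eq_mul_inv]

theorem Real.log_le_two_mul_of_mul_exp_eq {x w : ℝ} (hx : 0 < x)
    (hwx : w * Real.exp w = x) : Real.log x ≤ 2 * w := by
  rw [Real.log_le_iff_le_exp hx, two_mul, Real.exp_add, ← hwx]
  gcongr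
  linarith [Real.add_one_le_exp w]

noncomputable def lambertDerivPoly : ℕ → ℝ[X]
  | 0 => X
  | m + 1 => derivative (lambertDerivPoly m) * (X * (1 - X) ^ 2)
      - C ((m : ℝ) + 1) * lambertDerivPoly m

theorem lambertDerivPoly_eval_one (m : ℕ) :
    (lambertDerivPoly m).eval 1 = (-1) ^ m * m.factorial := by
  induction m with
  | zero => simp [lambertDerivPoly]
  | succ m ih =>
    simp only [lambertDerivPoly, eval_sub, eval_mul, eval_C, ih, eval_pow, eval_X, eval_one,
      Nat.factorial_succ]
    push_cast
    ring

section Lambert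

variable {W : ℝ → ℝ} (hW0 : ∀ x, 0 < x → 0 ≤ W x)
  (hW' : ∀ x, 0 < x → HasDerivAt W (W x / (x * (W x + 1))) x)
include hW0 hW'

theorem hasDerivAt_lambert_ratio {x : ℝ} (hx : 0 < x) :
    HasDerivAt (fun y => W y / (1 + W y))
      (W x / (1 + W x) * (1 - W x / (1 + W x)) ^ 2 / x) x := by
  have hW1 : 1 + W x ≠ 0 := by linarith [hW0 x hx]
  have hW1' : W x + 1 ≠ 0 := by linarith [hW0 x hx]
  refine ((hW' x hx).div ((hW' x hx).const_add 1) hW1).congr_deriv ?_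
  field_simp
  ring

theorem iteratedDeriv_succ_lambert (m : ℕ) {x : ℝ} (hx : 0 < x) :
    iteratedDeriv (m + 1) W x = (lambertDerivPoly m).eval (W x / (1 + W x)) / x ^ (m + 1) := by
  induction m generalizing x with
  | zero =>
    have hW1 : W x + 1 ≠ 0 := by linarith [hW0 x hx]
    have hW1' : 1 + W x ≠ 0 := by linarith [hW0 x hx]
    rw [iteratedDeriv_one, (hW' x hx).deriv, lambertDerivPoly, eval_X]
    field_simp
    ring
  | succ m ih =>
    have hev : iteratedDeriv (m + 1) W =ᶠ[nhds x]
        fun y => (lambertDerivPoly m).eval (W y / (1 + W y)) / y ^ (m + 1) :=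
      Filter.eventually_of_mem (Ioi_mem_nhds hx) fun y hy => ih hy
    have hderiv := ((Polynomial.hasDerivAt (lambertDerivPoly m) _).comp x
      (hasDerivAt_lambert_ratio hW0 hW' hx)).fun_div
      (hasDerivAt_pow (m + 1) x) (pow_ne_zero _ hx.ne')
    rw [iteratedDeriv_succ, hev.deriv_eq]
    refine hderiv.deriv.trans ?_
    rw [lambertDerivPoly]
    simp only [Function.comp_apply, Nat.add_sub_cancel, eval_sub, eval_mul, eval_C, eval_pow,
      eval_X, eval_one, Nat.cast_add, Nat.cast_one]
    field_simp
    ring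

end Lambert

theorem abs_iteratedDeriv_succ_lambert_sub_le {W : ℝ → ℝ}
    (hW : ∀ x, 0 ≤ x → 0 ≤ W x ∧ W x * Real.exp (W x) = x)
    (hW' : ∀ x, 0 < x → HasDerivAt W (W x / (x * (W x + 1))) x) (m : ℕ) :
    ∃ K, ∀ x, 1 < x → |iteratedDeriv (m + 1) W x - (-1) ^ m * m.factorial / x ^ (m + 1)| ≤
      K / (x ^ (m + 1) * Real.log x) := by
  have hW0 : ∀ x, 0 < x → 0 ≤ W x := fun x hx => (hW x hx.le).1
  obtain ⟨K, hK⟩ := (lambertDerivPoly m).exists_norm_eval_sub_eval_le 1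
    (isCompact_Icc (a := 0) (b := 1))
  refine ⟨2 * K, fun x hx => ?_⟩
  have hx0 : 0 < x := by linarith
  have hlog : 0 < Real.log x := Real.log_pos hx
  have hWx : 0 ≤ W x := hW0 x hx0
  rw [iteratedDeriv_succ_lambert hW0 hW' m hx0, ← lambertDerivPoly_eval_one, ← sub_div, abs_div,
    abs_of_pos (pow_pos hx0 _), mul_comm (x ^ (m + 1)), ← div_div,
    div_le_div_iff_of_pos_right (by positivity)]
  set u := W x / (1 + W x) with hu_def
  have hu : u ∈ Set.Icc 0 1 := ⟨by positivity, (div_le_one (by positivity)).2 (by linarith)⟩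
  have h1u : |u - 1| ≤ 2 / Real.log x := by
    have := Real.log_le_two_mul_of_mul_exp_eq hx0 (hW x hx0.le).2
    rw [abs_sub_comm, hu_def, one_sub_div (by positivity), add_sub_cancel_right,
      abs_of_pos (by positivity), div_le_div_iff₀ (by positivity) hlog]
    linarith
  have hK0 : 0 ≤ K := by simpa using (norm_nonneg _).trans (hK 0 ⟨le_rfl, zero_le_one⟩)
  calc _ ≤ K * |u - 1| := hK u hu
    _ ≤ K * (2 / Real.log x) := mul_le_mul_of_nonneg_left h1u hK0
    _ = 2 * K / Real.log x := by ring

/-- For fixed `n ≥ 1`, the `n`-th derivative of the Lambert W function satisfies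
`W⁽ⁿ⁾(x) = ((−1)^{n−1}(n−1)!/xⁿ)·(1 + O(1/log x))` as `x → ∞`, matching the asymptotics
of `dⁿ(log x)/dxⁿ = (−1)^{n−1}(n−1)!/xⁿ`. -/
theorem lambert_iterated_derivative_asymptotics (W : ℝ → ℝ) (n : ℕ) (hn : 1 ≤ n)
    (hW : ∀ x : ℝ, 0 ≤ x → 0 ≤ W x ∧ W x * Real.exp (W x) = x)
    (hW' : ∀ x : ℝ, 0 < x → HasDerivAt W (W x / (x * (W x + 1))) x) :
    (∀ x : ℝ, 0 < x →
      iteratedDeriv n Real.log x = (-1 : ℝ) ^ (n-1) * (Nat.factorial (n-1) : ℝ) / x ^ n) ∧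
    ∃ C > (0:ℝ), ∃ x₀ : ℝ, ∀ x : ℝ, x₀ ≤ x →
      |iteratedDeriv n W x - (-1 : ℝ) ^ (n-1) * (Nat.factorial (n-1) : ℝ) / x ^ n| ≤
        C * ((Nat.factorial (n-1) : ℝ) / x ^ n) / Real.log x := by
  obtain ⟨m, rfl⟩ : ∃ m, n = m + 1 := ⟨n - 1, by omega⟩
  simp only [Nat.add_sub_cancel]
  obtain ⟨K, hK⟩ := abs_iteratedDeriv_succ_lambert_sub_le hW hW' m
  refine ⟨fun x _ => Real.iteratedDeriv_succ_log m x, |K| + 1, by positivity, 2, fun x hx => ?_⟩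
  have hx0 : 0 < x := by linarith
  have hlog : 0 < Real.log x := Real.log_pos (by linarith)
  have hfac : (1 : ℝ) ≤ m.factorial := mod_cast m.factorial_pos
  calc _ ≤ K / (x ^ (m + 1) * Real.log x) := hK x (by linarith)
    _ ≤ (|K| + 1) * m.factorial / (x ^ (m + 1) * Real.log x) := by
        gcongr
        nlinarith [le_abs_self K, abs_nonneg K]
    _ = _ := by ring
end

section
/- For n ≥ 2 and β = −1, the momentum profile φ(τ) = 2(1 + τ + (n−1)(1+τ)^{1−n} − n(1+τ)^{2−n}) satisfies φ(0) = 0, φ'(0) = 0, and φ(τ) > 0 for all τ > 0. -/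
/-!
The profile factors as `φ(τ) = 2 (1 + τ)^{1-n} ((1 + τ)^n - 1 - nτ)`, so its positivity for
`τ > 0` is the strict Bernoulli inequality `1 + nτ < (1 + τ)^n`.
-/

noncomputable def momentumProfile (n : ℕ) (τ : ℝ) : ℝ :=
  2 * (1 + τ + ((n : ℝ) - 1) * (1 + τ) ^ ((1 : ℤ) - n) - (n : ℝ) * (1 + τ) ^ ((2 : ℤ) - n))

theorem momentumProfile_zero (n : ℕ) : momentumProfile n 0 = 0 := by
  simp [momentumProfile]

theorem hasDerivAt_momentumProfile (n : ℕ) {τ : ℝ} (hτ : 1 + τ ≠ 0) :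
    HasDerivAt (momentumProfile n)
      (2 * (1 - ((n : ℝ) - 1) ^ 2 * (1 + τ) ^ (-(n : ℤ))
        + n * (n - 2) * (1 + τ) ^ ((1 : ℤ) - n))) τ := by
  have hx : HasDerivAt (fun τ : ℝ => 1 + τ) 1 τ := (hasDerivAt_id τ).const_add 1
  have hzpow (m : ℤ) : HasDerivAt (fun τ : ℝ => (1 + τ) ^ m) (m * (1 + τ) ^ (m - 1)) τ := by
    simpa [Function.comp_def] using (hasDerivAt_zpow m (1 + τ) (Or.inl hτ)).comp τ hx
  refine (((hx.add ((hzpow (1 - n)).const_mul ((n : ℝ) - 1))).sub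
    ((hzpow (2 - n)).const_mul (n : ℝ))).const_mul 2).congr_deriv ?_
  rw [show (1 : ℤ) - n - 1 = -n by ring, show (2 : ℤ) - n - 1 = 1 - n by ring]
  push_cast
  ring

theorem deriv_momentumProfile_zero (n : ℕ) : deriv (momentumProfile n) 0 = 0 := by
  rw [(hasDerivAt_momentumProfile n (by norm_num)).deriv]
  simp only [add_zero, one_zpow, mul_one]
  ring

theorem momentumProfile_eq {n : ℕ} {τ : ℝ} (hτ : 1 + τ ≠ 0) :
    momentumProfile n τ = 2 * (1 + τ) ^ ((1 : ℤ) - n) * ((1 + τ) ^ n - 1 - n * τ) := by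
  have hsplit : (1 + τ) ^ ((2 : ℤ) - n) = (1 + τ) * (1 + τ) ^ ((1 : ℤ) - n) := by
    rw [← zpow_one_add₀ hτ]; ring_nf
  have hcancel : (1 + τ) ^ ((1 : ℤ) - n) * (1 + τ) ^ n = 1 + τ := by
    rw [← zpow_natCast, ← zpow_add₀ hτ]; simp
  rw [momentumProfile, hsplit]
  linear_combination (-2) * hcancel

theorem momentumProfile_pos {n : ℕ} (hn : 2 ≤ n) {τ : ℝ} (hτ : 0 < τ) :
    0 < momentumProfile n τ := by
  have hx : 0 < 1 + τ := by linarith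
  have bernoulli : 1 + n * τ < (1 + τ) ^ n := by
    have hn' : (1 : ℝ) < n := by exact_mod_cast hn
    simpa using one_add_mul_self_lt_rpow_one_add (by linarith) hτ.ne' hn'
  rw [momentumProfile_eq hx.ne']
  have hfactor : 0 < (1 + τ) ^ ((1 : ℤ) - n) := zpow_pos hx _
  have hgap : 0 < (1 + τ) ^ n - 1 - n * τ := by linarith
  positivity

/-- For `n ≥ 2`, the higher-dimensional Hwang–Singer momentum profile
`φ(τ) = 2(1 + τ + (n−1)(1+τ)^{1−n} − n(1+τ)^{2−n})` satisfies `φ(0) = 0`, `φ'(0) = 0`, and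
`φ(τ) > 0` for all `τ > 0`. -/
theorem higher_dim_momentum_profile (n : ℕ) (hn : 2 ≤ n) :
    let φ : ℝ → ℝ := fun τ =>
      2 * (1 + τ + ((n : ℝ) - 1) * (1 + τ) ^ ((1 : ℤ) - n) - (n : ℝ) * (1 + τ) ^ ((2 : ℤ) - n))
    φ 0 = 0 ∧ deriv φ 0 = 0 ∧ ∀ τ : ℝ, 0 < τ → 0 < φ τ :=
  ⟨momentumProfile_zero n, deriv_momentumProfile_zero n, fun _ hτ => momentumProfile_pos hn hτ⟩
end
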